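/- For every integer n ≥ 1, the independence domination number of the ortho-chain hexagonal cactus O_n equals ⌈3n/2⌉. -/

import Mathlib

/-- `S` is an independent dominating set of `G`: pairwise non-adjacent, and every
vertex outside `S` has a neighbour in `S`. -/
def IsIndepDomSet {V : Type*} (G : SimpleGraph V) (S : Finset V) : Prop :=
  (∀ v ∈ S, ∀ w ∈ S, ¬ G.Adj v w) ∧ ∀ v, v ∉ S → ∃ w ∈ S, G.Adj v w

/-- The ortho-chain hexagonal cactus `O n`: `Sum.inl i` is the cut vertex `x i`
(`0 ≤ i ≤ n`) and `Sum.inr (k, t)` for `t = 0, 1, 2, 3` is `a (k+1)`, `b (k+1)`,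
`c (k+1)`, `d (k+1)` respectively (`0 ≤ k ≤ n-1`); the `i`-th hexagon
(`1 ≤ i ≤ n`) is the six-cycle `x (i-1) – x i – a i – b i – c i – d i – x (i-1)`. -/
def orthoHex (n : ℕ) : SimpleGraph (Fin (n + 1) ⊕ Fin n × Fin 4) :=
  SimpleGraph.fromRel fun p q =>
    match p, q with
    | Sum.inl i, Sum.inl j => (i : ℕ) + 1 = (j : ℕ)
    | Sum.inl i, Sum.inr (k, t) =>
        ((i : ℕ) = (k : ℕ) + 1 ∧ t = 0) ∨ ((i : ℕ) = (k : ℕ) ∧ t = 3)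
    | Sum.inr (k, t), Sum.inr (k', t') =>
        k = k' ∧ ((t = 0 ∧ t' = 1) ∨ (t = 1 ∧ t' = 2) ∨ (t = 2 ∧ t' = 3))
    | _, _ => False

/-- The number of independent dominating sets of the ortho-chain hexagonal cactus `O n`. -/
noncomputable def numIDSOrthoHex (n : ℕ) : ℕ :=
  Nat.card {S : Finset (Fin (n + 1) ⊕ Fin n × Fin 4) // IsIndepDomSet (orthoHex n) S}

/-- The independence domination number of a graph: the minimum cardinality of an
independent dominating set. -/
noncomputable def indepDomNum {V : Type*} (G : SimpleGraph V) : ℕ :=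
  sInf {k | ∃ S : Finset V, IsIndepDomSet G S ∧ S.card = k}

/-!
Let `S` dominate `O n` and give each hexagon weight twice the number of its four inner vertices
in `S` plus the number of its two cut vertices in `S`; the total weight is at most `2 |S|`. The
inner path `a – b – c – d` of a hexagon needs a vertex of `S` on it, and a single one dominates the
whole path only together with a cut vertex, so every hexagon has weight at least `3` and
`3 n ≤ 2 |S|`. Conversely the cut vertices `x i` with `i` odd, together with `c i` for odd `i` and
`b i` for even `i`, form an independent dominating set of size `⌈3n/2⌉`.
-/

open Finset

lemma indepDomNum_eq_of_forall_card_le {V : Type*} {G : SimpleGraph V} {S : Finset V}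
    (hS : IsIndepDomSet G S) (hmin : ∀ T, IsIndepDomSet G T → S.card ≤ T.card) :
    indepDomNum G = S.card :=
  le_antisymm (Nat.sInf_le ⟨S, hS, rfl⟩)
    (le_csInf ⟨S.card, S, hS, rfl⟩ fun _ ⟨T, hT, hcard⟩ => hcard ▸ hmin T hT)

lemma Fin.card_filter_val_odd (m : ℕ) :
    (univ.filter fun i : Fin m => Odd (i : ℕ)).card = m / 2 := by
  rw [card_filter, Fin.sum_univ_eq_sum_range (fun i => if Odd i then 1 else 0)]
  induction m with
  | zero => rfl
  | succ m ih =>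
    rw [sum_range_succ, ih]
    split_ifs <;> grind

-- `ha`, …, `hd`: the inner vertices of the path `y – a – b – c – d – x` are dominated.
lemma three_le_of_path_dominated {x a b c d y : Prop} [Decidable x] [Decidable a] [Decidable b]
    [Decidable c] [Decidable d] [Decidable y] (ha : y ∨ a ∨ b) (hb : a ∨ b ∨ c) (hc : b ∨ c ∨ d)
    (hd : c ∨ d ∨ x) :
    3 ≤ 2 * ((if a then 1 else 0) + (if b then 1 else 0) + (if c then 1 else 0) +
      (if d then 1 else 0)) + (if x then 1 else 0) + (if y then 1 else 0) := by
  split_ifs <;> simp_all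

namespace OrthoHex

variable {n : ℕ}

@[simp]
lemma adj_inl_inl {i j : Fin (n + 1)} :
    (orthoHex n).Adj (.inl i) (.inl j) ↔ (i : ℕ) + 1 = j ∨ (j : ℕ) + 1 = i := by
  simp only [orthoHex, SimpleGraph.fromRel_adj, ne_eq, Sum.inl.injEq, Fin.ext_iff]
  omega

@[simp]
lemma adj_inl_inr {i : Fin (n + 1)} {k : Fin n} {t : Fin 4} :
    (orthoHex n).Adj (.inl i) (.inr (k, t)) ↔
      (i = k.succ ∧ t = 0) ∨ (i = k.castSucc ∧ t = 3) := by
  simp only [orthoHex, SimpleGraph.fromRel_adj, ne_eq, reduceCtorEq, not_false_eq_true,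
    or_false, true_and, Fin.ext_iff, Fin.val_succ, Fin.val_castSucc]

@[simp]
lemma adj_inr_inl {i : Fin (n + 1)} {k : Fin n} {t : Fin 4} :
    (orthoHex n).Adj (.inr (k, t)) (.inl i) ↔
      (i = k.succ ∧ t = 0) ∨ (i = k.castSucc ∧ t = 3) := by
  rw [SimpleGraph.adj_comm, adj_inl_inr]

@[simp]
lemma adj_inr_inr {k k' : Fin n} {t t' : Fin 4} :
    (orthoHex n).Adj (.inr (k, t)) (.inr (k', t')) ↔
      k = k' ∧ ((t : ℕ) + 1 = t' ∨ (t' : ℕ) + 1 = t) := by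
  simp only [orthoHex, SimpleGraph.fromRel_adj]
  fin_cases t <;> fin_cases t' <;> simp [eq_comm]

def indepDomSet (n : ℕ) : Finset (Fin (n + 1) ⊕ Fin n × Fin 4) :=
  (univ.filter fun i : Fin (n + 1) => Odd (i : ℕ)).disjSum
    (univ.image fun k : Fin n => (k, if Even (k : ℕ) then 2 else 1))

@[simp]
lemma inl_mem_indepDomSet {i : Fin (n + 1)} : .inl i ∈ indepDomSet n ↔ Odd (i : ℕ) := by
  simp [indepDomSet]

@[simp]
lemma inr_mem_indepDomSet {k : Fin n} {t : Fin 4} :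
    .inr (k, t) ∈ indepDomSet n ↔ t = if Even (k : ℕ) then 2 else 1 := by
  simp [indepDomSet, eq_comm]

lemma card_indepDomSet : (indepDomSet n).card = (3 * n + 1) / 2 := by
  rw [indepDomSet, card_disjSum, Fin.card_filter_val_odd,
    card_image_of_injective _ fun _ _ h => congrArg Prod.fst h, card_univ, Fintype.card_fin]
  omega

lemma isIndepDomSet_indepDomSet (hn : 1 ≤ n) : IsIndepDomSet (orthoHex n) (indepDomSet n) := by
  refine ⟨?_, ?_⟩
  · rintro (i | ⟨k, t⟩) hv (j | ⟨k', t'⟩) hw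
    all_goals simp only [inl_mem_indepDomSet, inr_mem_indepDomSet, adj_inl_inl, adj_inl_inr,
      adj_inr_inl, adj_inr_inr, Nat.odd_iff, Nat.even_iff, Fin.ext_iff, Fin.val_succ,
      Fin.val_castSucc] at *
    all_goals (try split_ifs at *) <;> omega
  · rintro (i | ⟨k, t⟩) hv
    · rw [inl_mem_indepDomSet, Nat.not_odd_iff_even] at hv
      by_cases hi : (i : ℕ) < n
      · exact ⟨.inl ⟨i + 1, by omega⟩, by simpa using hv.add_one, by simp⟩
      · refine ⟨.inl ⟨i - 1, by omega⟩, ?_, ?_⟩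
        · simp only [inl_mem_indepDomSet]
          exact Nat.Even.sub_odd (by omega) hv odd_one
        · simp
          omega
    · rw [inr_mem_indepDomSet] at hv
      by_cases hk : Even (k : ℕ)
      · simp only [hk, if_true] at hv
        fin_cases t
        · exact ⟨.inl k.succ, by simpa using hk.add_one, by simp⟩
        · exact ⟨.inr (k, 2), by simp [hk], by simp⟩
        · exact absurd rfl hv
        · exact ⟨.inr (k, 2), by simp [hk], by simp⟩
      · simp only [hk, if_false] at hv
        fin_cases t
        · exact ⟨.inr (k, 1), by simp [hk], by simp⟩
        · exact absurd rfl hv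
        · exact ⟨.inr (k, 1), by simp [hk], by simp⟩
        · exact ⟨.inl k.castSucc, by simpa using hk, by simp⟩

section Dominating

variable {S : Finset (Fin (n + 1) ⊕ Fin n × Fin 4)}

lemma hexagon_dominated (hDom : ∀ v ∉ S, ∃ w ∈ S, (orthoHex n).Adj v w) (k : Fin n) :
    (.inl k.succ ∈ S ∨ .inr (k, 0) ∈ S ∨ .inr (k, 1) ∈ S) ∧
    (.inr (k, 0) ∈ S ∨ .inr (k, 1) ∈ S ∨ .inr (k, 2) ∈ S) ∧
    (.inr (k, 1) ∈ S ∨ .inr (k, 2) ∈ S ∨ .inr (k, 3) ∈ S) ∧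
    (.inr (k, 2) ∈ S ∨ .inr (k, 3) ∈ S ∨ .inl k.castSucc ∈ S) := by
  have hN (t : Fin 4) : .inr (k, t) ∈ S ∨ ∃ w ∈ S, (orthoHex n).Adj (.inr (k, t)) w :=
    or_iff_not_imp_left.2 (hDom _)
  clear hDom
  refine ⟨?_, ?_, ?_, ?_⟩ <;>
    [have h := hN 0; have h := hN 1; have h := hN 2; have h := hN 3] <;> clear hN <;>
    rcases h with h | ⟨i | ⟨k', t'⟩, hw, hadj⟩
  all_goals first
    | tauto
    | simp at hadj <;> subst hadj <;> tauto
    | obtain ⟨rfl, ht⟩ := adj_inr_inr.1 hadj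
      fin_cases t' <;> simp at ht <;> tauto

lemma three_le_hexagon (hDom : ∀ v ∉ S, ∃ w ∈ S, (orthoHex n).Adj v w) (k : Fin n) :
    3 ≤ 2 * ∑ t : Fin 4, (if .inr (k, t) ∈ S then 1 else 0) +
      (if .inl k.castSucc ∈ S then 1 else 0) + (if .inl k.succ ∈ S then 1 else 0) := by
  obtain ⟨ha, hb, hc, hd⟩ := hexagon_dominated hDom k
  rw [Fin.sum_univ_four]
  exact three_le_of_path_dominated ha hb hc hd

theorem three_mul_le_two_mul_card (hDom : ∀ v ∉ S, ∃ w ∈ S, (orthoHex n).Adj v w) :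
    3 * n ≤ 2 * S.card := by
  set y : Fin (n + 1) → ℕ := fun j => if .inl j ∈ S then 1 else 0
  set g : Fin n → ℕ := fun k => ∑ t : Fin 4, if .inr (k, t) ∈ S then 1 else 0
  have hcard : S.card = ∑ j, y j + ∑ k, g k := by
    rw [← Fintype.sum_prod_type', ← Fintype.sum_sum_type (f := fun v => if v ∈ S then 1 else 0),
      sum_boole, filter_mem_eq_inter, univ_inter, Nat.cast_id]
  calc 3 * n = ∑ _k : Fin n, 3 := by simp [mul_comm]
    _ ≤ ∑ k : Fin n, (2 * g k + y k.castSucc + y k.succ) :=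
      sum_le_sum fun k _ => three_le_hexagon hDom k
    _ = 2 * ∑ k, g k + ∑ k : Fin n, y k.castSucc + ∑ k : Fin n, y k.succ := by
      rw [sum_add_distrib, sum_add_distrib, mul_sum]
    _ ≤ 2 * ∑ k, g k + 2 * ∑ j, y j := by
      have := Fin.sum_univ_castSucc y
      have := Fin.sum_univ_succ y
      omega
    _ = 2 * S.card := by rw [hcard]; ring

end Dominating

end OrthoHex

/-- For every `n ≥ 1`, the independence domination number of the ortho-chain
hexagonal cactus `O n` equals `⌈3n/2⌉`. -/
theorem indepDomNum_orthoHex (n : ℕ) (hn : 1 ≤ n) :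
    indepDomNum (orthoHex n) = (3 * n + 1) / 2 := by
  rw [← OrthoHex.card_indepDomSet]
  refine indepDomNum_eq_of_forall_card_le (OrthoHex.isIndepDomSet_indepDomSet hn) fun T hT => ?_
  have := OrthoHex.three_mul_le_two_mul_card hT.2
  rw [OrthoHex.card_indepDomSet]
  omega
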